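/- Let A be an associative unital normed ℝ-algebra and ε ∈ A with ε² = 0. Let q : ℝ → A be twice differentiable with q(t) and q̇(t) central in A for all t, and let ψ : ℝ → A be differentiable with ψ(s)ψ(t) + ψ(t)ψ(s) = 0 and εψ(t) + ψ(t)ε = 0, and moreover εψ̇(t) + ψ̇(t)ε = 0, for all s, t ∈ ℝ. Define the Lagrangian L(q,ψ)(t) = (1/4)q̇(t)² − ψ̇(t)ψ(t) and the transformed fields q' = q + εψ, ψ' = ψ − (1/4)εq̇. Then the Lagrangian is quasi-invariant: L(q',ψ')(t) − L(q,ψ)(t) = (1/4)ε (q̈(t)ψ(t) + q̇(t)ψ̇(t)) = (1/4)ε d/dt(q̇ψ)(t) for all t. -/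

import Mathlib

/-!
The transformed fields differ from the old ones by terms linear in ε, and every term quadratic
in ε vanishes because ε² = 0 and ε can be moved past q̇ and q̈ (central) and past ψ̇ (at the
cost of a sign). What survives of the kinetic term is (1/2) ε q̇ ψ̇, of which the fermionic term
cancels half, and ε q̈ ψ comes from the variation of ψ̇; by the Leibniz rule the sum is
(1/4) ε d/dt(q̇ ψ).
-/

theorem susy_lagrangian_variation_algebraic {R A : Type*} [CommRing R] [Ring A] [Algebra R A]
    (c : R) {ε a b p d : A} (hε : ε * ε = 0) (haε : Commute a ε) (had : Commute a d)
    (hbε : Commute b ε) (hεd : ε * d + d * ε = 0) :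
    c • ((a + ε * d) * (a + ε * d)) - (d - c • (ε * b)) * (p - c • (ε * a))
      - (c • (a * a) - d * p) = c • (ε * (b * p + a * d)) := by
  have hdε : d * ε = -(ε * d) := eq_neg_of_add_eq_zero_right hεd
  have hsq : (a + ε * d) * (a + ε * d) = a * a + ε * (a * d) + ε * (a * d) := by
    have hεdεd : ε * d * (ε * d) = 0 := by
      rw [mul_assoc, ← mul_assoc d, hdε, neg_mul, mul_neg, ← mul_assoc, ← mul_assoc, hε,
        zero_mul, zero_mul, neg_zero]
    rw [add_mul, mul_add, mul_add, hεdεd, ← mul_assoc, haε.eq, mul_assoc, mul_assoc, ← had.eq]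
    abel
  have hprod : (d - c • (ε * b)) * (p - c • (ε * a))
      = d * p + c • (ε * (a * d)) - c • (ε * (b * p)) := by
    have hdεa : d * (ε * a) = -(ε * (a * d)) := by
      rw [← mul_assoc, hdε, neg_mul, mul_assoc, had.eq]
    have hεbεa : ε * b * (ε * a) = 0 := by
      rw [mul_assoc, ← mul_assoc b, hbε.eq, mul_assoc, ← mul_assoc, hε, zero_mul]
    simp only [sub_mul, mul_sub, mul_smul_comm, smul_mul_assoc, hdεa, hεbεa,
      smul_zero, smul_neg, sub_zero, mul_assoc]
    abel
  rw [hsq, hprod]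
  simp only [mul_add, smul_add]
  abel

theorem Commute.deriv_left {𝕜 A : Type*} [NontriviallyNormedField 𝕜] [NormedRing A]
    [NormedAlgebra 𝕜 A] {f : 𝕜 → A} {x : A} {t : 𝕜} (hf : DifferentiableAt 𝕜 f t)
    (hfx : ∀ s, Commute (f s) x) : Commute (deriv f t) x := by
  have hfun : (fun s => f s * x) = fun s => x * f s := funext fun s => (hfx s).eq
  calc deriv f t * x = deriv (fun s => f s * x) t := (deriv_mul_const hf x).symm
    _ = deriv (fun s => x * f s) t := by rw [hfun]
    _ = x * deriv f t := deriv_const_mul x hf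

theorem susy_lagrangian_quasi_invariant_general
    {A : Type*} [NormedRing A] [NormedAlgebra ℝ A]
    (ε : A) (hε : ε * ε = 0)
    (q : ℝ → A)
    (hq : Differentiable ℝ q) (hq' : Differentiable ℝ (deriv q))
    (hq'c : ∀ t (x : A), deriv q t * x = x * deriv q t)
    (ψ : ℝ → A) (hψd : Differentiable ℝ ψ)
    (hεψ' : ∀ t, ε * deriv ψ t + deriv ψ t * ε = 0)
    (L : (ℝ → A) → (ℝ → A) → ℝ → A)
    (hL : ∀ (Q Ψ : ℝ → A) (t : ℝ),
      L Q Ψ t = (1/4 : ℝ) • (deriv Q t * deriv Q t) - deriv Ψ t * Ψ t)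
    (q' ψ' : ℝ → A)
    (hq'def : q' = fun t => q t + ε * ψ t)
    (hψ'def : ψ' = fun t => ψ t - (1/4 : ℝ) • (ε * deriv q t)) :
    ∀ t : ℝ,
      L q' ψ' t - L q ψ t
        = (1/4 : ℝ) • (ε * (deriv (deriv q) t * ψ t + deriv q t * deriv ψ t)) ∧
      L q' ψ' t - L q ψ t
        = (1/4 : ℝ) • (ε * deriv (fun s => deriv q s * ψ s) t) := by
  intro t
  have hdq' : deriv q' t = deriv q t + ε * deriv ψ t := by
    subst hq'def
    exact ((hq t).hasDerivAt.add ((hψd t).hasDerivAt.const_mul ε)).deriv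
  have hdψ' : deriv ψ' t = deriv ψ t - (1/4 : ℝ) • (ε * deriv (deriv q) t) := by
    subst hψ'def
    exact ((hψd t).hasDerivAt.sub (((hq' t).hasDerivAt.const_mul ε).const_smul (1/4 : ℝ))).deriv
  have hq''ε : Commute (deriv (deriv q) t) ε := Commute.deriv_left (hq' t) fun s => hq'c s ε
  have hvar : L q' ψ' t - L q ψ t
      = (1/4 : ℝ) • (ε * (deriv (deriv q) t * ψ t + deriv q t * deriv ψ t)) := by
    rw [hL, hL, hdq', hdψ', hψ'def]
    exact susy_lagrangian_variation_algebraic _ hε (hq'c t ε) (hq'c t _) hq''ε (hεψ' t)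
  exact ⟨hvar, by rw [hvar, deriv_fun_mul (hq' t) (hψd t)]⟩

/-- Quasi-invariance of the N=1 supersymmetric mechanics Lagrangian
L = (1/4)q̇² − ψ̇ψ under the supersymmetry transformation
q ↦ q + εψ, ψ ↦ ψ − (1/4)εq̇: the Lagrangian changes by the total
derivative (1/4)ε d/dt(q̇ψ). -/
theorem susy_lagrangian_quasi_invariant
    {A : Type*} [NormedRing A] [NormedAlgebra ℝ A]
    (ε : A) (hε : ε * ε = 0)
    (q : ℝ → A)
    (hq : Differentiable ℝ q) (hq' : Differentiable ℝ (deriv q))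
    (hqc : ∀ t (x : A), q t * x = x * q t)
    (hq'c : ∀ t (x : A), deriv q t * x = x * deriv q t)
    (ψ : ℝ → A) (hψd : Differentiable ℝ ψ)
    (hψψ : ∀ s t, ψ s * ψ t + ψ t * ψ s = 0)
    (hεψ : ∀ t, ε * ψ t + ψ t * ε = 0)
    (hεψ' : ∀ t, ε * deriv ψ t + deriv ψ t * ε = 0)
    (L : (ℝ → A) → (ℝ → A) → ℝ → A)
    (hL : ∀ (Q Ψ : ℝ → A) (t : ℝ),
      L Q Ψ t = (1/4 : ℝ) • (deriv Q t * deriv Q t) - deriv Ψ t * Ψ t)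
    (q' ψ' : ℝ → A)
    (hq'def : q' = fun t => q t + ε * ψ t)
    (hψ'def : ψ' = fun t => ψ t - (1/4 : ℝ) • (ε * deriv q t)) :
    ∀ t : ℝ,
      L q' ψ' t - L q ψ t
        = (1/4 : ℝ) • (ε * (deriv (deriv q) t * ψ t + deriv q t * deriv ψ t)) ∧
      L q' ψ' t - L q ψ t
        = (1/4 : ℝ) • (ε * deriv (fun s => deriv q s * ψ s) t) :=
  susy_lagrangian_quasi_invariant_general ε hε q hq hq' hq'c ψ hψd hεψ' L hL q' ψ' hq'def hψ'def
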